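/- arXiv:1904.12422 — 4 statements merged into one kernel-verified Lean document; each statement's English description precedes it below -/
import Mathlib

section
/- In a single-item auction on a social network of buyers, no mechanism is simultaneously strategy-proof, individually rational, efficient, and weakly budget balanced. Formally: suppose there are at least two buyers, a mechanism assigns the item and payments based on declared types (valuation plus set of neighbors informed), buyers who do not receive the auction information via a directed path of declared edges from the seller get no item and pay nothing, and the mechanism is (i) strategy-proof (no buyer benefits from misreporting her valuation or withholding information from some neighbors), (ii) individually rational (truthful buyers get nonnegative utility), (iii) efficient (the item always goes to an informed buyer with the highest declared valuation), and (iv) weakly budget balanced (the sum of payments is always nonnegative). Then a contradiction follows. -/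
/- Single-item auction via a social network (Li et al. model).  Each buyer declares a
valuation and a set of neighbors she informs; a buyer is informed iff there is a directed
path of declared edges from the seller to her. -/

/-- A declared type of a buyer: a valuation and the set of neighbors she informs. -/
structure Decl (n : ℕ) where
  v : ℝ
  R : Finset (Fin n)

/-- Buyer `i` is informed iff there is a directed path of declared edges from the seller
(whose neighbors are `sellerNbrs`) to `i`. -/
def Informed {n : ℕ} (sellerNbrs : Finset (Fin n)) (θ : Fin n → Decl n) (i : Fin n) : Prop :=
  ∃ j ∈ sellerNbrs, Relation.ReflTransGen (fun a b => b ∈ (θ a).R) j i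

/-- A single-item mechanism: given the seller's neighbors and the declared profile, it
chooses at most one winner and a payment for every buyer. -/
structure Mechanism (n : ℕ) where
  alloc : Finset (Fin n) → (Fin n → Decl n) → Option (Fin n)
  pay : Finset (Fin n) → (Fin n → Decl n) → Fin n → ℝ

/-- Quasi-linear utility of buyer `i` with true valuation `vi`. -/
noncomputable def utility {n : ℕ} (M : Mechanism n) (s : Finset (Fin n))
    (θ : Fin n → Decl n) (i : Fin n) (vi : ℝ) : ℝ :=
  (if M.alloc s θ = some i then vi else 0) - M.pay s θ i

/-- Valuations are nonnegative and a buyer is not her own neighbor. -/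
def ValidProfile {n : ℕ} (θ : Fin n → Decl n) : Prop :=
  ∀ i, 0 ≤ (θ i).v ∧ i ∉ (θ i).R

/-- Uninformed buyers get no item and pay nothing. -/
def Feasible {n : ℕ} (M : Mechanism n) : Prop :=
  ∀ s θ, ValidProfile θ → ∀ i, ¬ Informed s θ i →
    M.alloc s θ ≠ some i ∧ M.pay s θ i = 0

/-- Strategy-proofness: no buyer benefits from misreporting her valuation or withholding
the information from some of her neighbors (`R' ⊆ R`). -/
def StrategyProof {n : ℕ} (M : Mechanism n) : Prop :=
  ∀ s θ, ValidProfile θ → ∀ (i : Fin n) (d : Decl n), 0 ≤ d.v → d.R ⊆ (θ i).R →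
    utility M s (Function.update θ i d) i (θ i).v ≤ utility M s θ i (θ i).v

/-- Individual rationality: a truthful buyer gets nonnegative utility. -/
def IndividuallyRational {n : ℕ} (M : Mechanism n) : Prop :=
  ∀ s θ, ValidProfile θ → ∀ i, 0 ≤ utility M s θ i (θ i).v

/-- Efficiency: the item always goes to an informed buyer with the highest declared
valuation among informed buyers, and it is allocated whenever some buyer is informed. -/
def Efficient {n : ℕ} (M : Mechanism n) : Prop :=
  ∀ s θ, ValidProfile θ →
    (∀ w, M.alloc s θ = some w →
      Informed s θ w ∧ ∀ j, Informed s θ j → (θ j).v ≤ (θ w).v) ∧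
    ((∃ j, Informed s θ j) → ∃ w, M.alloc s θ = some w)

/-- Weak budget balance: the sum of payments is always nonnegative. -/
def WeaklyBudgetBalanced {n : ℕ} (M : Mechanism n) : Prop :=
  ∀ s θ, ValidProfile θ → 0 ≤ ∑ i, M.pay s θ i

/-- **Proposition 1.** With at least two buyers, no mechanism for single-item auctions via
a social network is simultaneously strategy-proof, individually rational, efficient, and
weakly budget balanced. -/
theorem no_sp_ir_efficient_wbb (n : ℕ) (hn : 2 ≤ n) (M : Mechanism n)
    (hfeas : Feasible M) (hsp : StrategyProof M) (hir : IndividuallyRational M)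
    (heff : Efficient M) (hwbb : WeaklyBudgetBalanced M) : False := by
  have h0 : 0 < n := by omega
  have h1 : 1 < n := by omega
  set a : Fin n := ⟨0, h0⟩ with ha
  set b : Fin n := ⟨1, h1⟩ with hb
  have hab : a ≠ b := by simp [ha, hb, Fin.ext_iff]
  set s : Finset (Fin n) := {a} with hs
  set prof : ℝ → Finset (Fin n) → ℝ → (Fin n → Decl n) :=
    fun va Ra vb i => if i = a then ⟨va, Ra⟩ else if i = b then ⟨vb, ∅⟩ else ⟨0, ∅⟩
    with hprof
  have pa : ∀ va Ra vb, prof va Ra vb a = ⟨va, Ra⟩ := by intro va Ra vb; simp [hprof]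
  have pb : ∀ va Ra vb, prof va Ra vb b = ⟨vb, ∅⟩ := by
    intro va Ra vb; simp [hprof, hab.symm]
  have pc : ∀ va Ra vb i, i ≠ a → i ≠ b → prof va Ra vb i = ⟨0, ∅⟩ := by
    intro va Ra vb i hia hib; simp [hprof, hia, hib]
  have hvalid : ∀ va vb : ℝ, 0 ≤ va → 0 ≤ vb → ∀ Ra, Ra ⊆ ({b} : Finset (Fin n)) →
      ValidProfile (prof va Ra vb) := by
    intro va vb h1' h2' Ra hRa i
    by_cases hia : i = a
    · subst hia
      refine ⟨by rw [pa]; exact h1', fun hmem => ?_⟩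
      rw [pa] at hmem
      have := hRa hmem
      simp at this
      exact hab this
    · by_cases hib : i = b
      · subst hib
        rw [pb]
        exact ⟨h2', by simp⟩
      · rw [pc _ _ _ _ hia hib]
        exact ⟨le_refl _, by simp⟩
  have hinf_a : ∀ va Ra vb, Informed s (prof va Ra vb) a :=
    fun va Ra vb => ⟨a, by simp [hs], Relation.ReflTransGen.refl⟩
  have hinf_b : ∀ va vb, Informed s (prof va {b} vb) b :=
    fun va vb => ⟨a, by simp [hs], Relation.ReflTransGen.single (by rw [pa]; simp)⟩
  have hchar : ∀ va Ra vb, Ra ⊆ {b} → ∀ i, Informed s (prof va Ra vb) i →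
      i = a ∨ (i = b ∧ b ∈ Ra) := by
    rintro va Ra vb hRa i ⟨j, hj, hpath⟩
    have hja : j = a := by simpa [hs] using hj
    subst hja
    induction hpath with
    | refl => exact Or.inl rfl
    | @tail c d hp step ih =>
      rcases ih with h | ⟨h, hm⟩
      · subst h
        rw [pa] at step
        have hbd := hRa step
        simp at hbd
        exact Or.inr ⟨hbd, hbd ▸ step⟩
      · subst h
        rw [pb] at step
        simp at step
  have hwin_a : ∀ va vb, 0 ≤ va → 0 ≤ vb → M.alloc s (prof va ∅ vb) = some a := by
    intro va vb h1' h2'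
    obtain ⟨hw1, hw2⟩ := heff s _ (hvalid va vb h1' h2' ∅ (by simp))
    obtain ⟨w, hw⟩ := hw2 ⟨a, hinf_a ..⟩
    rcases hchar va ∅ vb (by simp) w (hw1 w hw).1 with h | ⟨_, hm⟩
    · rw [hw, h]
    · simp at hm
  have hwin_b : ∀ va vb, 0 ≤ va → 0 ≤ vb → va < vb →
      M.alloc s (prof va {b} vb) = some b := by
    intro va vb h1' h2' hlt
    obtain ⟨hw1, hw2⟩ := heff s _ (hvalid va vb h1' h2' {b} (by simp))
    obtain ⟨w, hw⟩ := hw2 ⟨a, hinf_a ..⟩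
    obtain ⟨hwi, hmax⟩ := hw1 w hw
    rcases hchar va {b} vb (by simp) w hwi with h | ⟨h, _⟩
    · exfalso
      have hle := hmax b (hinf_b va vb)
      rw [h, pa, pb] at hle
      simp at hle
      linarith
    · rw [hw, h]
  -- Step 1: a alone with value 0 pays at most 0
  have hir0 := hir s (prof 0 ∅ 3) (hvalid 0 3 le_rfl (by norm_num) ∅ (by simp)) a
  rw [utility, pa] at hir0
  simp at hir0
  -- hir0 : M.pay s (prof 0 ∅ 3) a ≤ 0  (after massaging)
  -- Step 2: a alone with value 2 pays t2 ≤ t0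
  have hupd20 : Function.update (prof 2 ∅ 3) a (⟨0, ∅⟩ : Decl n) = prof 0 ∅ 3 := by
    funext i
    by_cases hia : i = a
    · subst hia; rw [Function.update_self, pa]
    · rw [Function.update_of_ne hia]
      by_cases hib : i = b
      · subst hib; rw [pb, pb]
      · rw [pc _ _ _ _ hia hib, pc _ _ _ _ hia hib]
  have hsp2 := hsp s (prof 2 ∅ 3) (hvalid 2 3 (by norm_num) (by norm_num) ∅ (by simp))
      a ⟨0, ∅⟩ le_rfl (by rw [pa])
  rw [hupd20, utility, utility, pa] at hsp2
  rw [hwin_a 0 3 le_rfl (by norm_num), hwin_a 2 3 (by norm_num) (by norm_num)] at hsp2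
  simp at hsp2
  -- Step 3: at P2 = prof 2 {b} 3, a's payment pa2 ≤ t2 - 2
  have hupd2 : Function.update (prof 2 {b} 3) a (⟨2, ∅⟩ : Decl n) = prof 2 ∅ 3 := by
    funext i
    by_cases hia : i = a
    · subst hia; rw [Function.update_self, pa]
    · rw [Function.update_of_ne hia]
      by_cases hib : i = b
      · subst hib; rw [pb, pb]
      · rw [pc _ _ _ _ hia hib, pc _ _ _ _ hia hib]
  have hspP2 := hsp s (prof 2 {b} 3) (hvalid 2 3 (by norm_num) (by norm_num) {b} (by simp))
      a ⟨2, ∅⟩ (by norm_num) (by rw [pa]; simp)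
  rw [hupd2, utility, utility, pa] at hspP2
  rw [hwin_a 2 3 (by norm_num) (by norm_num),
    hwin_b 2 3 (by norm_num) (by norm_num) (by norm_num)] at hspP2
  simp [hab.symm, Option.some_injective] at hspP2
  -- hspP2 : 2 - t2 ≤ - pa2  (need (some b = some a) = False)
  -- Step 4: at P1 = prof 1 {b} 3, a's payment pa1 ≤ pa2
  have hupd1 : Function.update (prof 1 {b} 3) a (⟨2, {b}⟩ : Decl n) = prof 2 {b} 3 := by
    funext i
    by_cases hia : i = a
    · subst hia; rw [Function.update_self, pa]
    · rw [Function.update_of_ne hia]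
      by_cases hib : i = b
      · subst hib; rw [pb, pb]
      · rw [pc _ _ _ _ hia hib, pc _ _ _ _ hia hib]
  have hspP1 := hsp s (prof 1 {b} 3) (hvalid 1 3 (by norm_num) (by norm_num) {b} (by simp))
      a ⟨2, {b}⟩ (by norm_num) (by rw [pa])
  rw [hupd1, utility, utility, pa] at hspP1
  rw [hwin_b 2 3 (by norm_num) (by norm_num) (by norm_num),
    hwin_b 1 3 (by norm_num) (by norm_num) (by norm_num)] at hspP1
  simp [hab.symm] at hspP1
  -- Step 5: WBB at P1 gives pb1 ≥ - pa1
  have hzero : ∀ i : Fin n, i ≠ a → i ≠ b → M.pay s (prof 1 {b} 3) i = 0 := by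
    intro i hia hib
    refine (hfeas s _ (hvalid 1 3 (by norm_num) (by norm_num) {b} (by simp)) i ?_).2
    intro hinf
    rcases hchar 1 {b} 3 (by simp) i hinf with h | ⟨h, _⟩
    · exact hia h
    · exact hib h
  have hsum := hwbb s (prof 1 {b} 3) (hvalid 1 3 (by norm_num) (by norm_num) {b} (by simp))
  have hsum2 : (∑ i, M.pay s (prof 1 {b} 3) i)
      = M.pay s (prof 1 {b} 3) a + M.pay s (prof 1 {b} 3) b := by
    apply Finset.sum_eq_add_of_mem a b (Finset.mem_univ a) (Finset.mem_univ b) hab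
    intro c _ hc
    exact hzero c hc.1 hc.2
  rw [hsum2] at hsum
  -- Step 6: b deviates at P1 to value 3/2
  have hupdb : Function.update (prof 1 {b} 3) b (⟨3/2, ∅⟩ : Decl n) = prof 1 {b} (3/2) := by
    funext i
    by_cases hib : i = b
    · subst hib; rw [Function.update_self, pb]
    · rw [Function.update_of_ne hib]
      by_cases hia : i = a
      · subst hia; rw [pa, pa]
      · rw [pc _ _ _ _ hia hib, pc _ _ _ _ hia hib]
  have hspb := hsp s (prof 1 {b} 3) (hvalid 1 3 (by norm_num) (by norm_num) {b} (by simp))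
      b ⟨3/2, ∅⟩ (by norm_num) (by rw [pb])
  rw [hupdb, utility, utility, pb] at hspb
  rw [hwin_b 1 3 (by norm_num) (by norm_num) (by norm_num),
    hwin_b 1 (3/2) (by norm_num) (by norm_num) (by norm_num)] at hspb
  simp at hspb
  -- hspb : M.pay s (prof 1 {b} 3) b ≤ M.pay s (prof 1 {b} (3/2)) b
  -- IR at Q for b
  have hirQ := hir s (prof 1 {b} (3/2))
      (hvalid 1 (3/2) (by norm_num) (by norm_num) {b} (by simp)) b
  rw [utility, pb, hwin_b 1 (3/2) (by norm_num) (by norm_num) (by norm_num)] at hirQ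
  simp at hirQ
  linarith
end

section
/- In the α-APG mechanism for a single-item auction on a path graph (APG), a buyer classified into Group 1 when truthful (i.e., a winner with v_i ≥ α·v*_N and v*_{P_i^close} < α·v*_N, paying v*_{P_i^close}) cannot increase her utility by any misreport: her truthful utility v_i − v*_{P_i^close} is at least α·v*_N − v*_{P_i^close} (Group 2 utility), at least v_i − v*_{P_i^close}/α (Group 3 utility), and at least 0 (Group 4 utility), given 0 < α < 1. -/
/-- In the α-APG mechanism on the aligned path graph, a buyer classified into Group 1 when
truthful (a winner with `v_i ≥ α·v*_N` and `v*_{P_i^close} < α·v*_N`, paying `v*_{P_i^close}`)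
cannot increase her utility by any misreport: her truthful utility `v_i − v*_{P_i^close}` is at
least the Group 2 utility `α·v*_N − v*_{P_i^close}`, at least the Group 3 utility
`v_i − v*_{P_i^close}/α`, and at least the Group 4 utility `0`. -/
theorem group1_truthful_optimal (α vi vN vclose : ℝ)
    (hα0 : 0 < α) (hα1 : α < 1)
    (hmax : vi ≤ vN)                -- v*_N is the maximum declared valuation
    (hclose0 : 0 ≤ vclose)          -- valuations are nonnegative
    (hwin : α * vN ≤ vi)            -- Group 1 winner condition
    (hgrp1 : vclose < α * vN) :     -- Group 1 payment condition
    (α * vN - vclose ≤ vi - vclose) ∧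
    (vi - vclose / α ≤ vi - vclose) ∧
    (0 ≤ vi - vclose) := by
  refine ⟨by linarith, ?_, by linarith⟩
  have : vclose ≤ vclose / α := by
    rw [le_div_iff₀ hα0]
    nlinarith
  linarith
end

section
/- The α-APG mechanism is strategy-proof: for every buyer i, every true type (v_i, R_i), every misreport (v_i', R_i') with R_i' ⊆ R_i, and every profile of the other buyers' declarations, buyer i's utility under truthful reporting is at least her utility under the misreport. -/
open scoped Classical

/-- Maximum declared valuation over a set of buyers (`0` on the empty set; valuations are
nonnegative). This is `v*_S`. -/
noncomputable def vstar {n : ℕ} (S : Finset (Fin n)) (v : Fin n → ℝ) : ℝ :=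
  S.fold max 0 v

/-- Buyers of `A` strictly closer to the seller than `i` on the aligned path graph
(the path order is the index order): `P_i^close`. -/
def closeSet {n : ℕ} (A : Finset (Fin n)) (i : Fin n) : Finset (Fin n) :=
  A.filter (· < i)

/-- Buyers of `A` strictly farther from the seller than `i`: `P_i^far`. -/
def farSet {n : ℕ} (A : Finset (Fin n)) (i : Fin n) : Finset (Fin n) :=
  A.filter (i < ·)

/-- The α-APG winner: the informed buyer closest to the seller whose declared valuation is
at least `α · v*_N`. -/
def IsWinner {n : ℕ} (α : ℝ) (A : Finset (Fin n)) (v : Fin n → ℝ) (i : Fin n) : Prop :=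
  i ∈ A ∧ α * vstar A v ≤ v i ∧ ∀ j ∈ A, α * vstar A v ≤ v j → i ≤ j

/-- The α-APG payment rule: a Group 1 winner (`v*_{P_w^close} < α·v*_{P_w^far}`) pays
`v*_{P_w^close}`; a Group 3 winner pays `v*_{P_w^close}/α`; a buyer closer than the winner
(Group 2) pays `v*_{P_i^close} − α·v*_N` (i.e. receives `α·v*_N − v*_{P_i^close}`); a buyer
farther than the winner (Group 4) pays `0`. -/
noncomputable def apgPay {n : ℕ} (α : ℝ) (A : Finset (Fin n)) (v : Fin n → ℝ)
    (i : Fin n) : ℝ :=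
  if IsWinner α A v i then
    (if vstar (closeSet A i) v < α * vstar (farSet A i) v then vstar (closeSet A i) v
     else vstar (closeSet A i) v / α)
  else if (i ∈ A ∧ ∃ w, IsWinner α A v w ∧ i < w) then
    vstar (closeSet A i) v - α * vstar A v
  else 0

/-- Quasi-linear utility of buyer `i` with true valuation `vi` under the α-APG mechanism,
when `A` is the set of informed buyers and `v` the declared valuations. -/
noncomputable def apgUtil {n : ℕ} (α : ℝ) (A : Finset (Fin n)) (v : Fin n → ℝ)
    (i : Fin n) (vi : ℝ) : ℝ :=
  (if IsWinner α A v i then vi else 0) - apgPay α A v i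

section APGhelp
variable {n : ℕ}

lemma vstar_le_iff {S : Finset (Fin n)} {v : Fin n → ℝ} {c : ℝ} :
    vstar S v ≤ c ↔ 0 ≤ c ∧ ∀ j ∈ S, v j ≤ c := Finset.fold_max_le c

lemma vstar_lt_iff {S : Finset (Fin n)} {v : Fin n → ℝ} {c : ℝ} :
    vstar S v < c ↔ 0 < c ∧ ∀ j ∈ S, v j < c := Finset.fold_max_lt c

lemma vstar_nonneg (S : Finset (Fin n)) (v : Fin n → ℝ) : 0 ≤ vstar S v :=
  (Finset.le_fold_max 0).2 (Or.inl le_rfl)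

lemma le_vstar {S : Finset (Fin n)} {v : Fin n → ℝ} {j : Fin n} (h : j ∈ S) :
    v j ≤ vstar S v := (Finset.le_fold_max (v j)).2 (Or.inr ⟨j, h, le_rfl⟩)

lemma vstar_mono {S T : Finset (Fin n)} (v : Fin n → ℝ) (h : S ⊆ T) :
    vstar S v ≤ vstar T v :=
  vstar_le_iff.2 ⟨vstar_nonneg _ _, fun j hj => le_vstar (h hj)⟩

lemma vstar_congr {S : Finset (Fin n)} {f g : Fin n → ℝ} (h : ∀ j ∈ S, f j = g j) :
    vstar S f = vstar S g := Finset.fold_congr h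

lemma winner_unique {α : ℝ} {A : Finset (Fin n)} {v : Fin n → ℝ} {w1 w2 : Fin n}
    (h1 : IsWinner α A v w1) (h2 : IsWinner α A v w2) : w1 = w2 :=
  le_antisymm (h1.2.2 _ h2.1 h2.2.1) (h2.2.2 _ h1.1 h1.2.1)

lemma winner_min {α : ℝ} {A : Finset (Fin n)} {v : Fin n → ℝ} {w j : Fin n}
    (hw : IsWinner α A v w) (hj : j ∈ A) (hlt : j < w) : v j < α * vstar A v := by
  by_contra hc
  push_neg at hc
  exact absurd (hw.2.2 j hj hc) (not_le.2 hlt)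

lemma winner_exists {α : ℝ} (hα0 : 0 ≤ α) (hα1 : α ≤ 1) {A : Finset (Fin n)}
    {v : Fin n → ℝ} (hv : ∀ j, 0 ≤ v j) (hA : A.Nonempty) : ∃ w, IsWinner α A v w := by
  classical
  have hQ : (A.filter (fun j => α * vstar A v ≤ v j)).Nonempty := by
    by_cases hM : 0 < vstar A v
    · have h2 : ¬ (0 < vstar A v ∧ ∀ j ∈ A, v j < vstar A v) := by
        intro hc
        exact lt_irrefl _ (vstar_lt_iff.2 hc)
      push_neg at h2
      obtain ⟨j, hj, hjv⟩ := h2 hM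
      exact ⟨j, Finset.mem_filter.2 ⟨hj, le_trans (by nlinarith) hjv⟩⟩
    · obtain ⟨a, ha⟩ := hA
      push_neg at hM
      have hM0 : vstar A v = 0 := le_antisymm hM (vstar_nonneg _ _)
      exact ⟨a, Finset.mem_filter.2 ⟨ha, by rw [hM0]; simpa using hv a⟩⟩
  refine ⟨(A.filter (fun j => α * vstar A v ≤ v j)).min' hQ, ?_, ?_, ?_⟩
  · exact (Finset.mem_filter.1 (Finset.min'_mem _ hQ)).1
  · exact (Finset.mem_filter.1 (Finset.min'_mem _ hQ)).2
  · exact fun j hj hle => Finset.min'_le _ j (Finset.mem_filter.2 ⟨hj, hle⟩)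

end APGhelp

section APGcases
variable {n : ℕ}

lemma apg_util_cases {α : ℝ} {A : Finset (Fin n)} {v : Fin n → ℝ} {i w : Fin n} (vi : ℝ)
    (hw : IsWinner α A v w) (hiA : i ∈ A) :
    (w = i ∧ apgUtil α A v i vi =
        vi - (if vstar (closeSet A i) v < α * vstar (farSet A i) v then vstar (closeSet A i) v
              else vstar (closeSet A i) v / α)) ∨
    (i < w ∧ apgUtil α A v i vi = α * vstar A v - vstar (closeSet A i) v) ∨
    (w < i ∧ apgUtil α A v i vi = 0) := by
  rcases lt_trichotomy w i with h | h | h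
  · refine Or.inr (Or.inr ⟨h, ?_⟩)
    have h1 : ¬ IsWinner α A v i := fun hc => absurd (winner_unique hw hc) (ne_of_lt h)
    have h2 : ¬ (i ∈ A ∧ ∃ w2, IsWinner α A v w2 ∧ i < w2) := by
      rintro ⟨-, w2, hw2, hlt⟩
      rw [winner_unique hw2 hw] at hlt
      exact absurd (hlt.trans h) (lt_irrefl i)
    simp [apgUtil, apgPay, h1, h2]
  · subst h
    exact Or.inl ⟨rfl, by simp [apgUtil, apgPay, hw]⟩
  · refine Or.inr (Or.inl ⟨h, ?_⟩)
    have h1 : ¬ IsWinner α A v i := fun hc => absurd (winner_unique hw hc) (ne_of_gt h)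
    have h2 : (i ∈ A ∧ ∃ w2, IsWinner α A v w2 ∧ i < w2) := ⟨hiA, w, hw, h⟩
    simp only [apgUtil, apgPay, if_neg h1, if_pos h2]
    ring

end APGcases

set_option maxHeartbeats 2000000 in
/-- **Strategy-proofness of the α-APG mechanism.**  For every buyer `i`, misreporting her
valuation (`v'`) and/or withholding the information (which removes a set `D` of buyers
farther than `i` from the auction) never yields more utility than truthful reporting. -/
theorem apg_strategyproof (n : ℕ) (α : ℝ) (hα0 : 0 < α) (hα1 : α < 1)
    (A : Finset (Fin n)) (v : Fin n → ℝ) (hv : ∀ i, 0 ≤ v i)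
    (i : Fin n) (hi : i ∈ A)
    (v' : ℝ) (hv' : 0 ≤ v')
    (D : Finset (Fin n)) (hD : ∀ j ∈ D, i < j) :
    apgUtil α (A \ D) (Function.update v i v') i (v i) ≤ apgUtil α A v i (v i) := by
  classical
  set u : Fin n → ℝ := Function.update v i v' with hudef
  have hiD : i ∉ D := fun h => lt_irrefl i (hD i h)
  have hiA' : i ∈ A \ D := Finset.mem_sdiff.2 ⟨hi, hiD⟩
  have hui : u i = v' := Function.update_self i v' v
  have hune : ∀ j : Fin n, j ≠ i → u j = v j := fun j hj => Function.update_of_ne hj v' v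
  have hu0 : ∀ j, 0 ≤ u j := by
    intro j
    by_cases h : j = i
    · rw [h, hui]; exact hv'
    · rw [hune j h]; exact hv j
  have hcloseeq : closeSet (A \ D) i = closeSet A i := by
    ext j
    simp only [closeSet, Finset.mem_filter, Finset.mem_sdiff]
    constructor
    · rintro ⟨⟨h1, _⟩, h2⟩; exact ⟨h1, h2⟩
    · rintro ⟨h1, h2⟩
      exact ⟨⟨h1, fun hjD => absurd (hD j hjD) (not_lt.2 h2.le)⟩, h2⟩
  have hCC : vstar (closeSet (A \ D) i) u = vstar (closeSet A i) v := by
    rw [hcloseeq]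
    exact vstar_congr fun j hj => hune j (ne_of_lt (Finset.mem_filter.1 hj).2)
  have hF'F : vstar (farSet (A \ D) i) u ≤ vstar (farSet A i) v := by
    have h1 : vstar (farSet (A \ D) i) u = vstar (farSet (A \ D) i) v :=
      vstar_congr fun j hj => hune j (ne_of_gt (Finset.mem_filter.1 hj).2)
    rw [h1]
    exact vstar_mono v (Finset.filter_subset_filter _ Finset.sdiff_subset)
  have hM0 : 0 ≤ vstar A v := vstar_nonneg _ _
  have hM'0 : 0 ≤ vstar (A \ D) u := vstar_nonneg _ _
  have hC0 : 0 ≤ vstar (closeSet A i) v := vstar_nonneg _ _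
  have hF0 : 0 ≤ vstar (farSet A i) v := vstar_nonneg _ _
  have hF'0 : 0 ≤ vstar (farSet (A \ D) i) u := vstar_nonneg _ _
  have hCM : vstar (closeSet A i) v ≤ vstar A v := vstar_mono v (Finset.filter_subset _ _)
  have hFM : vstar (farSet A i) v ≤ vstar A v := vstar_mono v (Finset.filter_subset _ _)
  have hviM : v i ≤ vstar A v := le_vstar hi
  have hv'M' : v' ≤ vstar (A \ D) u := by rw [← hui]; exact le_vstar hiA'
  have hM'le : vstar (A \ D) u ≤
      max (max (vstar (closeSet A i) v) v') (vstar (farSet (A \ D) i) u) := by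
    refine vstar_le_iff.2 ⟨le_trans hF'0 (le_max_right _ _), fun j hj => ?_⟩
    rcases lt_trichotomy j i with h | h | h
    · have hb : v j ≤ vstar (closeSet A i) v :=
        le_vstar (Finset.mem_filter.2 ⟨(Finset.mem_sdiff.1 hj).1, h⟩)
      rw [hune j (ne_of_lt h)]
      exact le_trans (le_trans hb (le_max_left _ _)) (le_max_left _ _)
    · rw [h, hui]; exact le_trans (le_max_right _ _) (le_max_left _ _)
    · exact le_trans (le_vstar (Finset.mem_filter.2 ⟨hj, h⟩)) (le_max_right _ _)
  have hMle : vstar A v ≤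
      max (max (vstar (closeSet A i) v) (v i)) (vstar (farSet A i) v) := by
    refine vstar_le_iff.2 ⟨le_trans hF0 (le_max_right _ _), fun j hj => ?_⟩
    rcases lt_trichotomy j i with h | h | h
    · have hb : v j ≤ vstar (closeSet A i) v := le_vstar (Finset.mem_filter.2 ⟨hj, h⟩)
      exact le_trans (le_trans hb (le_max_left _ _)) (le_max_left _ _)
    · rw [h]; exact le_trans (le_max_right _ _) (le_max_left _ _)
    · have hb : v j ≤ vstar (farSet A i) v := le_vstar (Finset.mem_filter.2 ⟨hj, h⟩)
      exact le_trans hb (le_max_right _ _)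
  obtain ⟨w, hw⟩ := winner_exists hα0.le hα1.le hv ⟨i, hi⟩
  obtain ⟨w', hw'⟩ := winner_exists hα0.le hα1.le hu0 ⟨i, hiA'⟩
  have hdevclose : i ≤ w' → ∀ j ∈ closeSet A i, v j < α * vstar (A \ D) u := by
    intro hiw j hj
    obtain ⟨hjA, hji⟩ := Finset.mem_filter.1 hj
    have hjD : j ∉ D := fun h => absurd (hD j h) (not_lt.2 hji.le)
    have hb := winner_min hw' (Finset.mem_sdiff.2 ⟨hjA, hjD⟩) (lt_of_lt_of_le hji hiw)
    rwa [hune j (ne_of_lt hji)] at hb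
  have hM'F' : i < w' → vstar (A \ D) u ≤ vstar (farSet (A \ D) i) u := by
    intro h
    have hv'lt : v' < α * vstar (A \ D) u := by
      have hb := winner_min hw' hiA' h; rwa [hui] at hb
    have hpos : 0 < α * vstar (A \ D) u := lt_of_le_of_lt hv' hv'lt
    have hαM' : α * vstar (A \ D) u < vstar (A \ D) u := by nlinarith
    have hClt : vstar (closeSet A i) v < α * vstar (A \ D) u :=
      vstar_lt_iff.2 ⟨hpos, fun j hj => hdevclose h.le j hj⟩
    by_contra hcon
    push_neg at hcon
    exact absurd hM'le (not_le.2 (max_lt (max_lt (lt_trans hClt hαM')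
      (lt_trans hv'lt hαM')) hcon))
  have himposs : α * vstar A v ≤ vstar (closeSet A i) v → i < w' → False := by
    intro hC h
    have hv'lt : v' < α * vstar (A \ D) u := by
      have hb := winner_min hw' hiA' h; rwa [hui] at hb
    have hpos : 0 < α * vstar (A \ D) u := lt_of_le_of_lt hv' hv'lt
    have hClt : vstar (closeSet A i) v < α * vstar (A \ D) u :=
      vstar_lt_iff.2 ⟨hpos, fun j hj => hdevclose h.le j hj⟩
    have h1 := hM'F' h
    have h2 : α * vstar (A \ D) u ≤ α * vstar A v :=
      mul_le_mul_of_nonneg_left (le_trans h1 (le_trans hF'F hFM)) hα0.le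
    linarith
  rcases apg_util_cases (v i) hw hi with ⟨hwi, hU⟩ | ⟨hwi, hU⟩ | ⟨hwi, hU⟩
  · -- truthful: i is the winner
    rw [hwi] at hw
    have hvige : α * vstar A v ≤ v i := hw.2.1
    have htc : ∀ j ∈ closeSet A i, v j < α * vstar A v := fun j hj =>
      winner_min hw (Finset.mem_filter.1 hj).1 (Finset.mem_filter.1 hj).2
    have hCle : vstar (closeSet A i) v ≤ α * vstar A v :=
      vstar_le_iff.2 ⟨mul_nonneg hα0.le hM0, fun j hj => (htc j hj).le⟩
    by_cases hg : vstar (closeSet A i) v < α * vstar (farSet A i) v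
    · -- truthful Group 1
      rw [if_pos hg] at hU
      have hαF : α * vstar (farSet A i) v ≤ α * vstar A v :=
        mul_le_mul_of_nonneg_left hFM hα0.le
      have hUpos : 0 ≤ v i - vstar (closeSet A i) v := by linarith
      rcases apg_util_cases (v i) hw' hiA' with ⟨hwi', hU'⟩ | ⟨hwi', hU'⟩ | ⟨hwi', hU'⟩
      · rw [hCC] at hU'
        by_cases hg' : vstar (closeSet A i) v < α * vstar (farSet (A \ D) i) u
        · rw [if_pos hg'] at hU'; rw [hU, hU']
        · rw [if_neg hg'] at hU'; rw [hU, hU']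
          have hdiv : vstar (closeSet A i) v ≤ vstar (closeSet A i) v / α :=
            (le_div_iff₀ hα0).2 (by nlinarith)
          linarith
      · rw [hCC] at hU'
        have h1 := hM'F' hwi'
        have h2 : α * vstar (A \ D) u ≤ α * vstar A v :=
          mul_le_mul_of_nonneg_left (le_trans h1 (le_trans hF'F hFM)) hα0.le
        rw [hU, hU']
        linarith
      · rw [hU, hU']; linarith
    · -- truthful Group 3
      rw [if_neg hg] at hU
      push_neg at hg
      have hkey : vstar (closeSet A i) v ≤ α * v i := by
        by_cases hMpos : 0 < vstar A v
        · have hCst : vstar (closeSet A i) v < α * vstar A v :=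
            vstar_lt_iff.2 ⟨mul_pos hα0 hMpos, htc⟩
          have hFlt : vstar (farSet A i) v < vstar A v := by nlinarith
          have hClt2 : vstar (closeSet A i) v < vstar A v := by nlinarith
          have hMvi : vstar A v ≤ v i := by
            by_contra hcon
            push_neg at hcon
            exact absurd hMle (not_le.2 (max_lt (max_lt hClt2 hcon) hFlt))
          nlinarith
        · push_neg at hMpos
          have hMz : vstar A v = 0 := le_antisymm hMpos hM0
          nlinarith [hv i]
      have hUpos : 0 ≤ v i - vstar (closeSet A i) v / α := by
        have hb : vstar (closeSet A i) v / α ≤ v i := (div_le_iff₀ hα0).2 (by nlinarith)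
        linarith
      rcases apg_util_cases (v i) hw' hiA' with ⟨hwi', hU'⟩ | ⟨hwi', hU'⟩ | ⟨hwi', hU'⟩
      · rw [hCC] at hU'
        by_cases hg' : vstar (closeSet A i) v < α * vstar (farSet (A \ D) i) u
        · rw [if_pos hg'] at hU'; rw [hU, hU']
          have hb : α * vstar (farSet (A \ D) i) u ≤ α * vstar (farSet A i) v :=
            mul_le_mul_of_nonneg_left hF'F hα0.le
          linarith
        · rw [if_neg hg'] at hU'; rw [hU, hU']
      · rw [hCC] at hU'
        have h1 := hM'F' hwi'
        have h2 : α * vstar (A \ D) u ≤ α * vstar (farSet A i) v :=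
          mul_le_mul_of_nonneg_left (le_trans h1 hF'F) hα0.le
        rw [hU, hU']
        linarith
      · rw [hU, hU']; linarith
  · -- truthful: winner is farther than i
    have hvilt : v i < α * vstar A v := winner_min hw hi hwi
    have hMαpos : 0 < α * vstar A v := lt_of_le_of_lt (hv i) hvilt
    have htc : ∀ j ∈ closeSet A i, v j < α * vstar A v := fun j hj =>
      winner_min hw (Finset.mem_filter.1 hj).1 (lt_trans (Finset.mem_filter.1 hj).2 hwi)
    have hCst : vstar (closeSet A i) v < α * vstar A v := vstar_lt_iff.2 ⟨hMαpos, htc⟩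
    rcases apg_util_cases (v i) hw' hiA' with ⟨hwi', hU'⟩ | ⟨hwi', hU'⟩ | ⟨hwi', hU'⟩
    · rw [hCC] at hU'
      by_cases hg' : vstar (closeSet A i) v < α * vstar (farSet (A \ D) i) u
      · rw [if_pos hg'] at hU'; rw [hU, hU']; linarith
      · rw [if_neg hg'] at hU'; rw [hU, hU']
        have hdiv : vstar (closeSet A i) v ≤ vstar (closeSet A i) v / α :=
          (le_div_iff₀ hα0).2 (by nlinarith)
        linarith
    · rw [hCC] at hU'
      have h1 := hM'F' hwi'
      have h2 : α * vstar (A \ D) u ≤ α * vstar A v :=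
        mul_le_mul_of_nonneg_left (le_trans h1 (le_trans hF'F hFM)) hα0.le
      rw [hU, hU']
      linarith
    · rw [hU, hU']; linarith
  · -- truthful: winner is closer than i
    have hwclose : w ∈ closeSet A i := Finset.mem_filter.2 ⟨hw.1, hwi⟩
    have hCge : α * vstar A v ≤ vstar (closeSet A i) v :=
      le_trans hw.2.1 (le_vstar hwclose)
    rcases apg_util_cases (v i) hw' hiA' with ⟨hwi', hU'⟩ | ⟨hwi', hU'⟩ | ⟨hwi', hU'⟩
    · rw [hCC] at hU'
      have hng : ¬ (vstar (closeSet A i) v < α * vstar (farSet (A \ D) i) u) := by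
        have hb : α * vstar (farSet (A \ D) i) u ≤ α * vstar A v :=
          mul_le_mul_of_nonneg_left (le_trans hF'F hFM) hα0.le
        exact not_lt.2 (by linarith)
      rw [if_neg hng] at hU'
      rw [hU, hU']
      have hb : v i * α ≤ vstar (closeSet A i) v := by nlinarith
      have h2 : v i ≤ vstar (closeSet A i) v / α := (le_div_iff₀ hα0).2 hb
      linarith
    · exact absurd (himposs hCge hwi') (fun h => h)
    · rw [hU, hU']
end

section
/- The Generalized APG (GAPG) mechanism is strategy-proof: for every buyer i, true type, misreport (v_i', R_i') with R_i' ⊆ R_i, and others' declarations, truthful reporting maximizes i's utility. Key inequalities: a truthful loser (v_{i,sum} ≤ v*_sum(N, n_k)) who lies to become a winner gets v_{i,sum} − v*_sum(P_i^close, n_k) ≤ v*_sum(N, n_k) − v*_sum(P_i^close, n_k); a truthful winner (v_{i,sum} ≥ v*_sum(N, n_k)) who lies to become a loser gets v*_sum(N, n_k) − v*_sum(P_i^close, n_k) ≤ v_{i,sum} − v*_sum(P_i^close, n_k); and withholding information can only decrease v*_sum(N, n_k) while leaving v*_sum(P_i^close, n_k) unchanged. -/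
/-!
Buyer `i`'s payment `v*_sum(P_i^close, n_k)` only involves buyers closer to the seller, whose
reports and presence she cannot affect, so it is the same under truthful and deviating play.
Truthfully, `i` wins only if her `n_k`-sum valuation is at least `v*_sum(N, n_k)` and loses
only if it is at most that value, so she gets the larger of the win value and the loser rebate.
A deviation that makes her a winner yields the win value; one that makes her a loser yields a
rebate at most `v*_sum(N, n_k)`, because a losing buyer can be erased without lowering the
`n_k`-th largest value, after which her report is irrelevant, and restoring the withheld buyers
can only raise that value.
-/

open scoped Classical

/-- `kthLargest S f m` is the `m`-th largest (1-indexed) value of `f` on the finite set `S`,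
with the convention that it is `0` if `S` has fewer than `m` elements. -/
noncomputable def kthLargest {α : Type*} (S : Finset α) (f : α → ℝ) (m : ℕ) : ℝ :=
  if 1 ≤ m ∧ m ≤ S.card then ((S.val.map f).sort (· ≤ ·)).getD (S.card - m) 0 else 0

/-- The `n_k`-sum valuation of a buyer: the sum of her first `n_k = ⌊√k⌋` marginal values. -/
noncomputable def nkSum (k : ℕ) {n : ℕ} (v : Fin n → ℕ → ℝ) (i : Fin n) : ℝ :=
  ∑ l ∈ Finset.range (Nat.sqrt k), v i l

/-- The rank of buyer `i` among the informed buyers `A` by declared `n_k`-sum valuation,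
ties broken in favor of smaller indices. -/
noncomputable def rank {n : ℕ} (A : Finset (Fin n)) (f : Fin n → ℝ) (i : Fin n) : ℕ :=
  (A.filter (fun j => f i < f j ∨ (f j = f i ∧ j < i))).card

/-- GAPG winners: the (up to `n_k`) informed buyers with the highest declared `n_k`-sum
valuations, ties broken by index. -/
noncomputable def Wins (k : ℕ) {n : ℕ} (A : Finset (Fin n)) (v : Fin n → ℕ → ℝ) (i : Fin n) : Prop :=
  i ∈ A ∧ rank A (nkSum k v) i < Nat.sqrt k

/-- GAPG utility of buyer `i` with true marginal values `vtrue`, when `A` is the set of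
informed buyers and `v'` the declared valuations: a winner gets `n_k` items and pays
`v*_sum(P_i^close, n_k)`; a loser receives the rebate
`v*_sum(N, n_k) − v*_sum(P_i^close, n_k)`. -/
noncomputable def gapgUtil (k : ℕ) {n : ℕ} (A : Finset (Fin n)) (v' : Fin n → ℕ → ℝ)
    (i : Fin n) (vtrue : ℕ → ℝ) : ℝ :=
  if Wins k A v' i then
    (∑ l ∈ Finset.range (Nat.sqrt k), vtrue l)
      - kthLargest (A.filter (· < i)) (nkSum k v') (Nat.sqrt k)
  else
    kthLargest A (nkSum k v') (Nat.sqrt k)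
      - kthLargest (A.filter (· < i)) (nkSum k v') (Nat.sqrt k)

open Finset

namespace List

variable {β : Type*} [LinearOrder β] {L : List β} {j : ℕ}

theorem Pairwise.length_sub_le_countP_getElem_le (hL : L.Pairwise (· ≤ ·)) (hj : j < L.length) :
    L.length - j ≤ L.countP (fun x => L[j] ≤ x) := by
  have hsplit : L = L.take j ++ L[j] :: L.drop (j + 1) := by
    rw [← drop_eq_getElem_cons hj, take_append_drop]
  have hlen : (L.drop (j + 1)).length + 1 = L.length - j := by
    rw [length_drop]; omega
  generalize L[j] = b at hsplit ⊢
  generalize L.take j = l₁ at hsplit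
  generalize L.drop (j + 1) = l₂ at hsplit hlen
  subst hsplit
  have hge : ∀ x ∈ l₂, b ≤ x := (pairwise_cons.mp (pairwise_append.mp hL).2.1).1
  have hcount : l₂.countP (fun x => b ≤ x) = l₂.length := countP_eq_length.mpr (by simpa using hge)
  rw [← hlen, countP_append, countP_cons, hcount]
  simp

theorem Pairwise.countP_getElem_lt_le (hL : L.Pairwise (· ≤ ·)) (hj : j < L.length) :
    L.countP (fun x => L[j] < x) ≤ L.length - (j + 1) := by
  have hsplit : L = L.take j ++ L[j] :: L.drop (j + 1) := by
    rw [← drop_eq_getElem_cons hj, take_append_drop]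
  have hlen : (L.drop (j + 1)).length = L.length - (j + 1) := length_drop
  generalize L[j] = b at hsplit ⊢
  generalize L.take j = l₁ at hsplit
  generalize L.drop (j + 1) = l₂ at hsplit hlen
  subst hsplit
  have hle : ∀ x ∈ l₁, x ≤ b := fun x hx => (pairwise_append.mp hL).2.2 x hx b mem_cons_self
  rw [← hlen, countP_append, countP_cons, countP_eq_zero.mpr (by simpa using hle)]
  simpa using countP_le_length

end List

section kthLargest

variable {α : Type*} {S T : Finset α} {f g : α → ℝ} {m : ℕ} {c : ℝ}

theorem countP_sort_map_eq_card_filter (p : ℝ → Prop) [DecidablePred p] :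
    ((S.val.map f).sort (· ≤ ·)).countP (fun x => decide (p x)) = #{a ∈ S | p (f a)} := by
  rw [← Multiset.coe_countP, Multiset.sort_eq, Multiset.countP_map]
  rfl

theorem length_sort_map : ((S.val.map f).sort (· ≤ ·)).length = #S := by
  rw [Multiset.length_sort, Multiset.card_map, card_def]

theorem kthLargest_eq_getElem (h1 : 1 ≤ m) (h2 : m ≤ #S) :
    kthLargest S f m = ((S.val.map f).sort (· ≤ ·))[#S - m]'(by rw [length_sort_map]; omega) := by
  rw [kthLargest, if_pos ⟨h1, h2⟩, List.getD_eq_getElem]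

theorem le_card_filter_kthLargest_le (h1 : 1 ≤ m) (h2 : m ≤ #S) :
    m ≤ #{a ∈ S | kthLargest S f m ≤ f a} := by
  have hj : #S - m < ((S.val.map f).sort (· ≤ ·)).length := by rw [length_sort_map]; omega
  have := (Multiset.pairwise_sort _ _).length_sub_le_countP_getElem_le hj
  rw [← kthLargest_eq_getElem h1 h2, countP_sort_map_eq_card_filter (kthLargest S f m ≤ ·),
    length_sort_map] at this
  omega

theorem card_filter_kthLargest_lt_lt (h1 : 1 ≤ m) (h2 : m ≤ #S) :
    #{a ∈ S | kthLargest S f m < f a} < m := by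
  have hj : #S - m < ((S.val.map f).sort (· ≤ ·)).length := by rw [length_sort_map]; omega
  have := (Multiset.pairwise_sort _ _).countP_getElem_lt_le hj
  rw [← kthLargest_eq_getElem h1 h2, countP_sort_map_eq_card_filter (kthLargest S f m < ·),
    length_sort_map] at this
  omega

theorem le_kthLargest_of_le_card_filter (h1 : 1 ≤ m) (h : m ≤ #{a ∈ S | c ≤ f a}) :
    c ≤ kthLargest S f m := by
  by_contra! hlt
  have h2 : m ≤ #S := h.trans (card_filter_le _ _)
  have hsub : {a ∈ S | c ≤ f a} ⊆ {a ∈ S | kthLargest S f m < f a} :=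
    monotone_filter_right S fun a _ hca => hlt.trans_le hca
  exact (h.trans (card_le_card hsub)).not_gt (card_filter_kthLargest_lt_lt h1 h2)

theorem kthLargest_le_of_card_filter_lt (h1 : 1 ≤ m) (h2 : m ≤ #S)
    (h : #{a ∈ S | c < f a} < m) : kthLargest S f m ≤ c := by
  by_contra! hlt
  have hsub : {a ∈ S | kthLargest S f m ≤ f a} ⊆ {a ∈ S | c < f a} :=
    monotone_filter_right S fun a _ hka => hlt.trans_le hka
  exact (le_card_filter_kthLargest_le h1 h2 |>.trans (card_le_card hsub)).not_gt h

theorem kthLargest_nonneg (hf : ∀ a ∈ S, 0 ≤ f a) : 0 ≤ kthLargest S f m := by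
  by_cases h : 1 ≤ m ∧ m ≤ #S
  · refine le_kthLargest_of_le_card_filter h.1 ?_
    rw [filter_true_of_mem hf]
    exact h.2
  · rw [kthLargest, if_neg h]

theorem kthLargest_mono (hST : S ⊆ T) (hf : ∀ a ∈ T, 0 ≤ f a) :
    kthLargest S f m ≤ kthLargest T f m := by
  by_cases h : 1 ≤ m ∧ m ≤ #S
  · exact le_kthLargest_of_le_card_filter h.1 <|
      (le_card_filter_kthLargest_le h.1 h.2).trans (card_le_card (filter_subset_filter _ hST))
  · rw [kthLargest, if_neg h]
    exact kthLargest_nonneg hf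

theorem kthLargest_congr (h : ∀ a ∈ S, f a = g a) : kthLargest S f m = kthLargest S g m := by
  rw [kthLargest, kthLargest, Multiset.map_congr rfl h]

end kthLargest

section rank

variable {n : ℕ} {S T : Finset (Fin n)} {f g : Fin n → ℝ} {i : Fin n} {m : ℕ} {c : ℝ}

theorem rank_le_card_filter_erase (hc : c ≤ f i) : rank S f i ≤ #{j ∈ S.erase i | c ≤ f j} := by
  refine card_le_card fun j hj => ?_
  simp only [mem_filter, mem_erase] at hj ⊢
  obtain ⟨hjS, hfij | ⟨hfij, hji⟩⟩ := hj
  · exact ⟨⟨by rintro rfl; exact hfij.false, hjS⟩, hc.trans hfij.le⟩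
  · exact ⟨⟨hji.ne, hjS⟩, hc.trans hfij.ge⟩

theorem card_filter_lt_le_rank : #{j ∈ S | f i < f j} ≤ rank S f i :=
  card_le_card <| monotone_filter_right S fun _ _ h => Or.inl h

theorem le_kthLargest_of_le_rank (hm : 1 ≤ m) (h : m ≤ rank S f i) : f i ≤ kthLargest S f m :=
  le_kthLargest_of_le_card_filter hm <| h.trans <| (rank_le_card_filter_erase le_rfl).trans <|
    card_le_card <| filter_subset_filter _ (erase_subset i S)

theorem kthLargest_le_of_rank_lt (hfi : 0 ≤ f i) (h : rank S f i < m) :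
    kthLargest S f m ≤ f i := by
  by_cases hm : 1 ≤ m ∧ m ≤ #S
  · exact kthLargest_le_of_card_filter_lt hm.1 hm.2 (card_filter_lt_le_rank.trans_lt h)
  · rw [kthLargest, if_neg hm]
    exact hfi

theorem kthLargest_le_kthLargest_erase_of_le_rank (h : m ≤ rank S f i) :
    kthLargest S f m ≤ kthLargest (S.erase i) f m := by
  rcases Nat.eq_zero_or_pos m with rfl | hm
  · simp [kthLargest]
  refine le_kthLargest_of_le_card_filter hm ?_
  by_cases hc : kthLargest S f m ≤ f i
  · exact h.trans (rank_le_card_filter_erase hc)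
  · refine (le_card_filter_kthLargest_le (f := f) hm (h.trans (card_filter_le _ _))).trans
      (card_le_card ?_)
    intro j hj
    simp only [mem_filter, mem_erase] at hj ⊢
    exact ⟨⟨by rintro rfl; exact hc hj.2, hj.1⟩, hj.2⟩

theorem kthLargest_le_of_le_rank (h : m ≤ rank S f i) (hST : S ⊆ T) (hfg : ∀ j ≠ i, f j = g j)
    (hg : ∀ j ∈ T, 0 ≤ g j) : kthLargest S f m ≤ kthLargest T g m :=
  calc kthLargest S f m ≤ kthLargest (S.erase i) f m := kthLargest_le_kthLargest_erase_of_le_rank h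
    _ = kthLargest (S.erase i) g m := kthLargest_congr fun j hj => hfg j (ne_of_mem_erase hj)
    _ ≤ kthLargest T g m := kthLargest_mono ((erase_subset i S).trans hST) hg

end rank

theorem gapg_strategyproof_general (n k : ℕ) (hk : 0 < k)
    (A : Finset (Fin n)) (v : Fin n → ℕ → ℝ)
    (hv : ∀ j, (∀ l, 0 ≤ v j l) ∧ ∀ l, l + 1 < k → v j (l + 1) ≤ v j l)
    (i : Fin n) (hi : i ∈ A)
    (v' : ℕ → ℝ)
    (D : Finset (Fin n)) (hD : ∀ j ∈ D, i < j) :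
    gapgUtil k (A \ D) (Function.update v i v') i (v i) ≤ gapgUtil k A v i (v i) := by
  have hnk : 1 ≤ Nat.sqrt k := Nat.sqrt_pos.mpr hk
  have hoff : ∀ j ≠ i, nkSum k (Function.update v i v') j = nkSum k v j := fun j hj => by
    simp only [nkSum, Function.update_of_ne hj]
  have hnonneg : ∀ j, 0 ≤ nkSum k v j := fun j => sum_nonneg fun l _ => (hv j).1 l
  have hclose : (A \ D).filter (· < i) = A.filter (· < i) := by
    ext j
    simp only [mem_filter, mem_sdiff]
    exact ⟨fun h => ⟨h.1.1, h.2⟩, fun h => ⟨⟨h.1, fun hj => (hD j hj).not_gt h.2⟩, h.2⟩⟩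
  have hpayment : kthLargest ((A \ D).filter (· < i)) (nkSum k (Function.update v i v')) (Nat.sqrt k)
      = kthLargest (A.filter (· < i)) (nkSum k v) (Nat.sqrt k) := by
    rw [hclose]
    exact kthLargest_congr fun j hj => hoff j (mem_filter.mp hj).2.ne
  have hiD : i ∈ A \ D := mem_sdiff.mpr ⟨hi, fun h => (hD i h).false⟩
  have hdeviate_lose (h : ¬Wins k (A \ D) (Function.update v i v') i) :
      kthLargest (A \ D) (nkSum k (Function.update v i v')) (Nat.sqrt k)
        ≤ kthLargest A (nkSum k v) (Nat.sqrt k) :=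
    kthLargest_le_of_le_rank (not_lt.mp fun hr => h ⟨hiD, hr⟩) sdiff_subset hoff
      fun j _ => hnonneg j
  unfold gapgUtil
  rw [hpayment]
  split_ifs with hW' hW hW <;> refine sub_le_sub_right ?_ _
  · exact le_rfl
  · exact le_kthLargest_of_le_rank hnk (not_lt.mp fun hr => hW ⟨hi, hr⟩)
  · exact (hdeviate_lose hW').trans (kthLargest_le_of_rank_lt (hnonneg i) hW.2)
  · exact hdeviate_lose hW'

/-- **Strategy-proofness of the generalized APG (GAPG) mechanism.**  For every buyer `i`
with decreasing nonnegative marginal values, misreporting her valuations (`v'`) and/or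
withholding information (which removes a set `D` of buyers farther than `i` on the aligned
path graph from the auction) never yields more utility than truthful reporting. -/
theorem gapg_strategyproof (n k : ℕ) (hk : 0 < k)
    (A : Finset (Fin n)) (v : Fin n → ℕ → ℝ)
    (hv : ∀ j, (∀ l, 0 ≤ v j l) ∧ ∀ l, l + 1 < k → v j (l + 1) ≤ v j l)
    (i : Fin n) (hi : i ∈ A)
    (v' : ℕ → ℝ) (hv' : (∀ l, 0 ≤ v' l) ∧ ∀ l, l + 1 < k → v' (l + 1) ≤ v' l)
    (D : Finset (Fin n)) (hD : ∀ j ∈ D, i < j) :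
    gapgUtil k (A \ D) (Function.update v i v') i (v i) ≤ gapgUtil k A v i (v i) :=
  gapg_strategyproof_general n k hk A v hv i hi v' D hD
end
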